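/- arXiv:1607.02371 — 3 statements merged into one kernel-verified Lean document; each statement's English description precedes it below -/
import Mathlib

section
/- Let Ψ(W) = ∑_y ∑_{s=0}^{W_y} (λ_y − k_c s / β_y) + k_a ∑_{x,y} ∑_{s=0}^{W_{xy}} s. If W' = W − e_{x ȳ} + e_{x ȳ'} (one data atom of unit x moved from resource ȳ to resource ȳ'), then Ψ(W') − Ψ(W) = f_{x ȳ'}(W') − f_{x ȳ}(W), where f_{xy}(W) = λ_y − k_c W_y / β_y + k_a W_{xy}. Hence Ψ is an exact potential for the allocation game. -/
variable {X : Type*} [Fintype X]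

/-- Column sum `W_y = ∑_x W_{xy}`. -/
def colsum (W : X → X → ℕ) (y : X) : ℕ := ∑ x, W x y

/-- Utility `f_{xy}(W) = λ_y − k_c W_y / β_y + k_a W_{xy}`. -/
noncomputable def payoff (lam : X → ℝ) (kc ka : ℝ) (β : X → ℕ)
    (W : X → X → ℕ) (x y : X) : ℝ :=
  lam y - kc * (colsum W y : ℝ) / (β y : ℝ) + ka * (W x y : ℝ)

/-- Potential `Ψ(W) = ∑_y ∑_{s=0}^{W_y} (λ_y − k_c s / β_y)
  + k_a ∑_{x,y} ∑_{s=0}^{W_{xy}} s`. -/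
noncomputable def potential (lam : X → ℝ) (kc ka : ℝ) (β : X → ℕ)
    (W : X → X → ℕ) : ℝ :=
  (∑ y, ∑ s ∈ Finset.range (colsum W y + 1), (lam y - kc * (s : ℝ) / (β y : ℝ)))
    + ka * ∑ x, ∑ y, ∑ s ∈ Finset.range (W x y + 1), (s : ℝ)

/-- `Ψ` is an exact potential: if `W' = W − e_{xȳ} + e_{xȳ'}`, then
`Ψ(W') − Ψ(W) = f_{xȳ'}(W') − f_{xȳ}(W)`. -/
theorem potential_is_exact [DecidableEq X]
    (lam : X → ℝ) (kc ka : ℝ) (β : X → ℕ) (hβ : ∀ y, 0 < β y)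
    (W W' : X → X → ℕ) (x ybar ybar' : X) (hne : ybar ≠ ybar')
    (hpos : 0 < W x ybar)
    (hW' : ∀ u v, W' u v =
      W u v - (if u = x ∧ v = ybar then 1 else 0)
        + (if u = x ∧ v = ybar' then 1 else 0)) :
    potential lam kc ka β W' - potential lam kc ka β W =
      payoff lam kc ka β W' x ybar' - payoff lam kc ka β W x ybar := by
  classical
  have hxx : W x ybar = W' x ybar + 1 := by
    have h := hW' x ybar; simp [hne] at h; omega
  have hxx' : W' x ybar' = W x ybar' + 1 := by
    have h := hW' x ybar'; simp [hne, Ne.symm hne] at h; omega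
  have hother : ∀ u v, (u ≠ x ∨ v ≠ ybar) → (u ≠ x ∨ v ≠ ybar') → W' u v = W u v := by
    intro u v h1 h2
    have h := hW' u v
    have e1 : ¬(u = x ∧ v = ybar) := by tauto
    have e2 : ¬(u = x ∧ v = ybar') := by tauto
    simpa [e1, e2] using h
  have hc1 : colsum W ybar = colsum W' ybar + 1 := by
    unfold colsum
    rw [← Finset.sum_erase_add _ _ (Finset.mem_univ x),
        ← Finset.sum_erase_add _ _ (Finset.mem_univ x)]
    have h : ∀ u ∈ Finset.univ.erase x, W u ybar = W' u ybar := fun u hu =>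
      (hother u ybar (Or.inl (Finset.ne_of_mem_erase hu))
        (Or.inl (Finset.ne_of_mem_erase hu))).symm
    rw [Finset.sum_congr rfl h]
    omega
  have hc2 : colsum W' ybar' = colsum W ybar' + 1 := by
    unfold colsum
    rw [← Finset.sum_erase_add _ _ (Finset.mem_univ x),
        ← Finset.sum_erase_add _ _ (Finset.mem_univ x)]
    have h : ∀ u ∈ Finset.univ.erase x, W' u ybar' = W u ybar' := fun u hu =>
      hother u ybar' (Or.inl (Finset.ne_of_mem_erase hu))
        (Or.inl (Finset.ne_of_mem_erase hu))
    rw [Finset.sum_congr rfl h]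
    omega
  have hcother : ∀ y, y ≠ ybar → y ≠ ybar' → colsum W' y = colsum W y := by
    intro y h1 h2
    exact Finset.sum_congr rfl fun u _ => hother u y (Or.inr h1) (Or.inr h2)
  -- first part
  set g : (X → X → ℕ) → X → ℝ :=
    fun V y => ∑ s ∈ Finset.range (colsum V y + 1), (lam y - kc * (s : ℝ) / (β y : ℝ))
    with hg
  have key1 : (∑ y, g W' y) - (∑ y, g W y) =
      (lam ybar' - kc * (colsum W' ybar' : ℝ) / (β ybar' : ℝ))
        - (lam ybar - kc * (colsum W ybar : ℝ) / (β ybar : ℝ)) := by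
    rw [← Finset.sum_sub_distrib]
    rw [← Finset.sum_subset (Finset.subset_univ ({ybar, ybar'} : Finset X))
      (fun y _ hy => by
        simp only [Finset.mem_insert, Finset.mem_singleton, not_or] at hy
        simp [hg, hcother y hy.1 hy.2])]
    rw [Finset.sum_pair hne]
    have h1 : g W' ybar - g W ybar = -(lam ybar - kc * (colsum W ybar : ℝ) / (β ybar : ℝ)) := by
      simp only [hg, hc1, Finset.sum_range_succ]
      push_cast [hc1]
      ring
    have h2 : g W' ybar' - g W ybar' = lam ybar' - kc * (colsum W' ybar' : ℝ) / (β ybar' : ℝ) := by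
      simp only [hg, hc2, Finset.sum_range_succ]
      push_cast [hc2]
      ring
    rw [h1, h2]; ring
  -- second part
  set h : (X → X → ℕ) → X → ℝ :=
    fun V u => ∑ y, ∑ s ∈ Finset.range (V u y + 1), (s : ℝ) with hh
  have key2 : (∑ u, h W' u) - (∑ u, h W u) = (W' x ybar' : ℝ) - (W x ybar : ℝ) := by
    rw [← Finset.sum_sub_distrib]
    rw [Finset.sum_eq_single x
      (fun u _ hu => by
        have : ∀ y, W' u y = W u y := fun y => hother u y (Or.inl hu) (Or.inl hu)
        simp [hh, this])
      (fun hu => absurd (Finset.mem_univ x) hu)]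
    simp only [hh, ← Finset.sum_sub_distrib]
    rw [← Finset.sum_subset (Finset.subset_univ ({ybar, ybar'} : Finset X))
      (fun y _ hy => by
        simp only [Finset.mem_insert, Finset.mem_singleton, not_or] at hy
        simp [hother x y (Or.inr hy.1) (Or.inr hy.2)])]
    rw [Finset.sum_pair hne]
    have h1 : (∑ s ∈ Finset.range (W' x ybar + 1), (s : ℝ))
        - ∑ s ∈ Finset.range (W x ybar + 1), (s : ℝ) = -(W x ybar : ℝ) := by
      have e : (∑ s ∈ Finset.range (W x ybar + 1), (s : ℝ))
          = (∑ s ∈ Finset.range (W' x ybar + 1), (s : ℝ)) + ((W' x ybar : ℝ) + 1) := by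
        rw [hxx, Finset.sum_range_succ]; push_cast; ring
      rw [e, hxx]; push_cast; ring
    have h2 : (∑ s ∈ Finset.range (W' x ybar' + 1), (s : ℝ))
        - ∑ s ∈ Finset.range (W x ybar' + 1), (s : ℝ) = (W' x ybar' : ℝ) := by
      have e : (∑ s ∈ Finset.range (W' x ybar' + 1), (s : ℝ))
          = (∑ s ∈ Finset.range (W x ybar' + 1), (s : ℝ)) + ((W x ybar' : ℝ) + 1) := by
        rw [hxx', Finset.sum_range_succ]; push_cast; ring
      rw [e, hxx']; push_cast; ring
    rw [h1, h2]; ring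
  unfold potential payoff
  rw [show ∀ a b c d : ℝ, a + ka * b - (c + ka * d) = (a - c) + ka * (b - d) from
    fun _ _ _ _ => by ring]
  rw [key1, key2]
  ring
end

section
/- Every allocation state W maximizing the potential Ψ over the set of allocation states W is a Nash equilibrium: for every x, every y ∈ N_x with W_{xy} > 0, and every y' ∈ N_x with W_{y'} < β_{y'}, it holds f_{xy}(W) ≥ f_{xy'}(W − e_{xy} + e_{xy'}). -/
variable {X : Type*} [Fintype X]

/-- (Complete) allocation state: supported on edges, row sums `= α_x`,
column sums `≤ β_y`. -/
def IsAllocState (E : X → X → Prop) (α β : X → ℕ) (W : X → X → ℕ) : Prop :=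
  (∀ x y, ¬ E x y → W x y = 0) ∧ (∀ x, ∑ y, W x y = α x) ∧ ∀ y, colsum W y ≤ β y

/-- any allocation state maximizing the potential `Ψ` over
allocation states is a Nash equilibrium. -/
theorem maximizer_is_nash [DecidableEq X]
    (E : X → X → Prop) (α β : X → ℕ) (lam : X → ℝ) (kc ka : ℝ)
    (W : X → X → ℕ) (hW : IsAllocState E α β W)
    (hmax : ∀ V : X → X → ℕ, IsAllocState E α β V →
      potential lam kc ka β V ≤ potential lam kc ka β W) :
    ∀ x y y' : X, E x y → 0 < W x y → E x y' → colsum W y' < β y' →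
      payoff lam kc ka β
          (fun u v => W u v - (if u = x ∧ v = y then 1 else 0)
            + (if u = x ∧ v = y' then 1 else 0)) x y'
        ≤ payoff lam kc ka β W x y := by
  intro x y y' hxy hpos hxy' hlt
  classical
  by_cases hyy : y = y'
  · subst hyy
    have hWeq : (fun u v => W u v - (if u = x ∧ v = y then 1 else 0)
            + (if u = x ∧ v = y then 1 else 0)) = W := by
      funext u v
      by_cases h : u = x ∧ v = y
      · obtain ⟨hu, hv⟩ := h
        subst hu; subst hv
        simp
        omega
      · simp [h]
    rw [hWeq]
  -- main case: y ≠ y'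
  set W' : X → X → ℕ := fun u v => W u v - (if u = x ∧ v = y then 1 else 0)
            + (if u = x ∧ v = y' then 1 else 0) with hW'def
  show payoff lam kc ka β W' x y' ≤ payoff lam kc ka β W x y
  have ha : 1 ≤ W x y := hpos
  have hc : 1 ≤ colsum W y := by
    have : W x y ≤ colsum W y :=
      Finset.single_le_sum (f := fun u => W u y) (fun i _ => Nat.zero_le _) (Finset.mem_univ x)
    omega
  have hW'xy : W' x y = W x y - 1 := by simp [hW'def, hyy]
  have hW'xy' : W' x y' = W x y' + 1 := by simp [hW'def, Ne.symm hyy]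
  have hW'other : ∀ u v, ¬(u = x ∧ v = y) → ¬(u = x ∧ v = y') → W' u v = W u v := by
    intro u v h1 h2; simp [hW'def, h1, h2]
  have hW'ne : ∀ u v, u ≠ x → W' u v = W u v := by
    intro u v hu
    exact hW'other u v (fun h => hu h.1) (fun h => hu h.1)
  -- column sums of W'
  have hkey : ∀ z, colsum W' z = W' x z + ∑ u ∈ Finset.univ.erase x, W u z := by
    intro z
    rw [colsum, ← Finset.add_sum_erase _ _ (Finset.mem_univ x)]
    congr 1
    exact Finset.sum_congr rfl fun u hu => hW'ne u z (Finset.ne_of_mem_erase hu)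
  have hkeyW : ∀ z, colsum W z = W x z + ∑ u ∈ Finset.univ.erase x, W u z := by
    intro z
    rw [colsum, ← Finset.add_sum_erase _ _ (Finset.mem_univ x)]
  have hcy : colsum W' y = colsum W y - 1 := by
    have h1 := hkey y; have h2 := hkeyW y
    rw [hW'xy] at h1; omega
  have hcy' : colsum W' y' = colsum W y' + 1 := by
    have h1 := hkey y'; have h2 := hkeyW y'
    rw [hW'xy'] at h1; omega
  have hcz : ∀ z, z ≠ y → z ≠ y' → colsum W' z = colsum W z := by
    intro z h1 h2
    have h3 := hkey z; have h4 := hkeyW z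
    rw [hW'other x z (fun h => h1 h.2) (fun h => h2 h.2)] at h3
    omega
  -- W' is an allocation state
  have hW'alloc : IsAllocState E α β W' := by
    refine ⟨?_, ?_, ?_⟩
    · intro u v h
      have h1 : ¬(u = x ∧ v = y) := fun ⟨hu, hv⟩ => h (hu ▸ hv ▸ hxy)
      have h2 : ¬(u = x ∧ v = y') := fun ⟨hu, hv⟩ => h (hu ▸ hv ▸ hxy')
      rw [hW'other u v h1 h2]; exact hW.1 u v h
    · intro u
      by_cases hu : u = x
      · subst hu
        have hmem : y' ∈ Finset.univ.erase y :=
          Finset.mem_erase.mpr ⟨Ne.symm hyy, Finset.mem_univ y'⟩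
        have h1 : ∑ v, W' u v
            = W' u y + (W' u y' + ∑ v ∈ (Finset.univ.erase y).erase y', W u v) := by
          rw [← Finset.add_sum_erase _ _ (Finset.mem_univ y)]
          congr 1
          rw [← Finset.add_sum_erase _ _ hmem]
          congr 1
          refine Finset.sum_congr rfl fun v hv => ?_
          have hv1 : v ≠ y' := Finset.ne_of_mem_erase hv
          have hv2 : v ≠ y := Finset.ne_of_mem_erase (Finset.mem_of_mem_erase hv)
          exact hW'other u v (fun h => hv2 h.2) (fun h => hv1 h.2)
        have h2 : ∑ v, W u v
            = W u y + (W u y' + ∑ v ∈ (Finset.univ.erase y).erase y', W u v) := by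
          rw [← Finset.add_sum_erase _ _ (Finset.mem_univ y)]
          congr 1
          rw [← Finset.add_sum_erase _ _ hmem]
        have h3 := hW.2.1 u
        rw [hW'xy, hW'xy'] at h1
        omega
      · rw [Finset.sum_congr rfl fun v _ => hW'ne u v hu]
        exact hW.2.1 u
    · intro z
      by_cases h1 : z = y
      · subst h1; rw [hcy]; have := hW.2.2 z; omega
      by_cases h2 : z = y'
      · subst h2; rw [hcy']; omega
      · rw [hcz z h1 h2]; exact hW.2.2 z
  -- potential difference
  have hpot : potential lam kc ka β W'
      = potential lam kc ka β W
        + (payoff lam kc ka β W' x y' - payoff lam kc ka β W x y) := by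
    have hA : ∀ z, (∑ s ∈ Finset.range (colsum W' z + 1), (lam z - kc * (s : ℝ) / (β z : ℝ)))
        = (∑ s ∈ Finset.range (colsum W z + 1), (lam z - kc * (s : ℝ) / (β z : ℝ)))
          + ((if z = y' then lam y' - kc * ((colsum W y' : ℝ) + 1) / (β y' : ℝ) else 0)
            - (if z = y then lam y - kc * (colsum W y : ℝ) / (β y : ℝ) else 0)) := by
      intro z
      by_cases h1 : z = y
      · subst h1
        have he : colsum W' z + 1 = colsum W z := by omega
        rw [he, if_neg hyy, if_pos rfl,
          Finset.sum_range_succ (fun s => lam z - kc * (s : ℝ) / (β z : ℝ)) (colsum W z)]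
        ring
      by_cases h2 : z = y'
      · subst h2
        have he : colsum W' z + 1 = (colsum W z + 1) + 1 := by omega
        rw [he, if_pos rfl, if_neg h1,
          Finset.sum_range_succ (fun s => lam z - kc * (s : ℝ) / (β z : ℝ)) (colsum W z + 1)]
        push_cast
        ring
      · rw [hcz z h1 h2, if_neg h2, if_neg h1]; ring
    have hB : ∀ u v, (∑ s ∈ Finset.range (W' u v + 1), (s : ℝ))
        = (∑ s ∈ Finset.range (W u v + 1), (s : ℝ))
          + ((if u = x ∧ v = y' then (W x y' : ℝ) + 1 else 0)
            - (if u = x ∧ v = y then (W x y : ℝ) else 0)) := by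
      intro u v
      by_cases h1 : u = x ∧ v = y
      · obtain ⟨hu, hv⟩ := h1; subst hu; subst hv
        have he : W' u v + 1 = W u v := by omega
        rw [he, if_neg (fun h => hyy h.2), if_pos ⟨rfl, rfl⟩,
          Finset.sum_range_succ (fun s => (s : ℝ)) (W u v)]
        ring
      by_cases h2 : u = x ∧ v = y'
      · obtain ⟨hu, hv⟩ := h2; subst hu; subst hv
        have he : W' u v + 1 = (W u v + 1) + 1 := by
          rw [hW'xy']
        rw [he, if_pos ⟨rfl, rfl⟩, if_neg h1,
          Finset.sum_range_succ (fun s => (s : ℝ)) (W u v + 1)]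
        push_cast
        ring
      · rw [hW'other u v h1 h2, if_neg h2, if_neg h1]; ring
    rw [potential, potential]
    rw [Finset.sum_congr rfl fun z _ => hA z]
    rw [Finset.sum_add_distrib, Finset.sum_sub_distrib]
    simp only [Finset.sum_ite_eq', Finset.mem_univ, if_pos]
    rw [Finset.sum_congr rfl fun u _ => Finset.sum_congr rfl fun v _ => hB u v]
    simp only [Finset.sum_add_distrib, Finset.sum_sub_distrib]
    have hsy' : ∀ u : X, (∑ v, if u = x ∧ v = y' then (W x y' : ℝ) + 1 else 0)
        = if u = x then (W x y' : ℝ) + 1 else 0 := by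
      intro u
      by_cases hu : u = x
      · subst hu; simp
      · simp [hu]
    have hsy : ∀ u : X, (∑ v, if u = x ∧ v = y then (W x y : ℝ) else 0)
        = if u = x then (W x y : ℝ) else 0 := by
      intro u
      by_cases hu : u = x
      · subst hu; simp
      · simp [hu]
    rw [Finset.sum_congr rfl fun u _ => hsy' u, Finset.sum_congr rfl fun u _ => hsy u]
    simp only [Finset.sum_ite_eq', Finset.mem_univ, if_pos]
    rw [payoff, payoff, hcy', hW'xy']
    push_cast
    ring
  have hle := hmax W' hW'alloc
  rw [hpot] at hle
  linarith
end

section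
/- The Markov chain on complete allocation states defined by the algorithm is reversible with respect to the measure μ(W) ∝ (α choose W) e^{γΨ(W)}, where (α choose W) = (∏_x α_x!)/(∏_{x,y} W_{xy}!). Precisely, for all complete allocation states W, W': (α choose W) e^{γΨ(W)} P_{W,W'} = (α choose W') e^{γΨ(W')} P_{W',W}. -/
variable {X : Type*} [Fintype X]

/-- `W − e_{xy} + e_{xy'}`: one atom of unit `x` moved from `y` to `y'`. -/
def move [DecidableEq X] (W : X → X → ℕ) (x y y' : X) : X → X → ℕ :=
  fun u v => W u v - (if u = x ∧ v = y then 1 else 0)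
    + (if u = x ∧ v = y' then 1 else 0)

/-- `W − e_{xy}`: one atom of unit `x` removed from `y`. -/
def remove [DecidableEq X] (W : X → X → ℕ) (x y : X) : X → X → ℕ :=
  fun u v => W u v - if u = x ∧ v = y then 1 else 0


set_option linter.unusedSectionVars false
set_option linter.unreachableTactic false
set_option linter.unusedTactic false

section Helpers
variable [DecidableEq X]
variable {W : X → X → ℕ} {x y y' : X}

lemma move_pt (hy : y ≠ y') (h : 0 < W x y) (u v : X) :
    move W x y y' u v + (if u = x ∧ v = y then 1 else 0)
      = W u v + (if u = x ∧ v = y' then 1 else 0) := by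
  unfold move
  by_cases h1 : u = x ∧ v = y
  · obtain ⟨rfl, rfl⟩ := h1
    simp [hy]; omega
  · simp [h1]

lemma move_xy (hy : y ≠ y') (h : 0 < W x y) :
    move W x y y' x y + 1 = W x y := by
  have := move_pt hy h x y; simpa [hy] using this

lemma move_xy' (hy : y ≠ y') (h : 0 < W x y) :
    move W x y y' x y' = W x y' + 1 := by
  have := move_pt hy h x y'; simpa [hy.symm] using this

lemma move_other (hy : y ≠ y') (h : 0 < W x y) {u v : X}
    (hv : ¬(u = x ∧ v = y)) (hv' : ¬(u = x ∧ v = y')) :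
    move W x y y' u v = W u v := by
  have := move_pt hy h u v; simpa [hv, hv'] using this

lemma move_move (hy : y ≠ y') (h : 0 < W x y) :
    move (move W x y y') x y' y = W := by
  funext u v
  have hW : 1 ≤ W x y := h
  by_cases h1 : u = x <;> by_cases h2 : v = y <;> by_cases h3 : v = y' <;>
    simp only [move, h1, h2, h3, if_true, if_false, and_true, and_false,
      true_and, false_and, if_neg hy, if_neg hy.symm] <;>
    first
      | (subst h1; subst h2; simp [hy]; omega)
      | simp_all [move]
      | omega

lemma remove_move (hy : y ≠ y') (h : 0 < W x y) :
    remove (move W x y y') x y' = remove W x y := by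
  funext u v
  by_cases h1 : u = x ∧ v = y
  · obtain ⟨rfl, rfl⟩ := h1; simp [remove, move, hy]
  · by_cases h2 : u = x ∧ v = y'
    · obtain ⟨rfl, rfl⟩ := h2; simp [remove, move, hy.symm, h1]
    · simp [remove, move, h1, h2]

lemma fact_move (hy : y ≠ y') (h : 0 < W x y) :
    (∏ u, ∏ v, (W u v).factorial) * (move W x y y' x y')
      = (∏ u, ∏ v, (move W x y y' u v).factorial) * (W x y) := by
  have key : ∀ u v, (W u v).factorial * (if u = x ∧ v = y' then move W x y y' x y' else 1)
      = (move W x y y' u v).factorial * (if u = x ∧ v = y then W x y else 1) := by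
    intro u v
    by_cases h1 : u = x ∧ v = y
    · have hne : ¬(u = x ∧ v = y') := fun hc => hy (h1.2.symm.trans hc.2)
      rw [if_neg hne, if_pos h1, h1.1, h1.2, ← move_xy hy h, Nat.factorial_succ]
      ring
    · by_cases h2 : u = x ∧ v = y'
      · rw [if_pos h2, if_neg h1, h2.1, h2.2, move_xy' hy h, Nat.factorial_succ]
        ring
      · rw [if_neg h1, if_neg h2, move_other hy h h1 h2]
  calc (∏ u, ∏ v, (W u v).factorial) * (move W x y y' x y')
      = ∏ u, ∏ v, ((W u v).factorial * (if u = x ∧ v = y' then move W x y y' x y' else 1)) := by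
        simp only [Finset.prod_mul_distrib]
        simp [ite_and, Finset.prod_ite_eq]
    _ = ∏ u, ∏ v, ((move W x y y' u v).factorial * (if u = x ∧ v = y then W x y else 1)) :=
        Finset.prod_congr rfl fun u _ => Finset.prod_congr rfl fun v _ => key u v
    _ = _ := by
        simp only [Finset.prod_mul_distrib]
        simp [ite_and, Finset.prod_ite_eq]

lemma colsum_move (hy : y ≠ y') (h : 0 < W x y) (v : X) :
    colsum (move W x y y') v + (if v = y then 1 else 0)
      = colsum W v + (if v = y' then 1 else 0) := by
  unfold colsum
  have := fun u => move_pt hy h u v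
  calc (∑ u, move W x y y' u v) + (if v = y then 1 else 0)
      = ∑ u, (move W x y y' u v + if u = x ∧ v = y then 1 else 0) := by
        rw [Finset.sum_add_distrib]; simp [ite_and, Finset.sum_ite_eq]
    _ = ∑ u, (W u v + if u = x ∧ v = y' then 1 else 0) :=
        Finset.sum_congr rfl fun u _ => this u
    _ = _ := by rw [Finset.sum_add_distrib]; simp [ite_and, Finset.sum_ite_eq]

lemma colsum_move_y (hy : y ≠ y') (h : 0 < W x y) :
    colsum (move W x y y') y + 1 = colsum W y := by
  have := colsum_move hy h y; simpa [hy] using this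

lemma colsum_move_y' (hy : y ≠ y') (h : 0 < W x y) :
    colsum (move W x y y') y' = colsum W y' + 1 := by
  have := colsum_move hy h y'; simpa [hy.symm] using this

lemma colsum_move_other (hy : y ≠ y') (h : 0 < W x y) {v : X}
    (h1 : v ≠ y) (h2 : v ≠ y') :
    colsum (move W x y y') v = colsum W v := by
  have := colsum_move hy h v; simpa [h1, h2] using this

lemma potential_move (lam : X → ℝ) (kc ka : ℝ) (β : X → ℕ)
    (hy : y ≠ y') (h : 0 < W x y) :
    potential lam kc ka β W + payoff lam kc ka β (move W x y y') x y'
      = potential lam kc ka β (move W x y y') + payoff lam kc ka β W x y := by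
  have hA : ∀ v, (∑ s ∈ Finset.range (colsum W v + 1), (lam v - kc * (s : ℝ) / (β v : ℝ)))
      + (if v = y' then lam y' - kc * (colsum (move W x y y') y' : ℝ) / (β y' : ℝ) else 0)
      = (∑ s ∈ Finset.range (colsum (move W x y y') v + 1), (lam v - kc * (s : ℝ) / (β v : ℝ)))
      + (if v = y then lam y - kc * (colsum W y : ℝ) / (β y : ℝ) else 0) := by
    intro v
    by_cases h1 : v = y
    · subst h1
      rw [if_neg hy, if_pos rfl, ← colsum_move_y hy h, Finset.sum_range_succ]
      push_cast; ring
    · by_cases h2 : v = y'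
      · subst h2
        rw [if_pos rfl, if_neg h1, colsum_move_y' hy h,
          eq_comm, Finset.sum_range_succ]
        push_cast; ring
      · rw [if_neg h1, if_neg h2, colsum_move_other hy h h1 h2]
  have hB : ∀ u v, (∑ s ∈ Finset.range (W u v + 1), (s : ℝ))
      + (if u = x ∧ v = y' then (move W x y y' x y' : ℝ) else 0)
      = (∑ s ∈ Finset.range (move W x y y' u v + 1), (s : ℝ))
      + (if u = x ∧ v = y then (W x y : ℝ) else 0) := by
    intro u v
    by_cases h1 : u = x ∧ v = y
    · have hne : ¬(u = x ∧ v = y') := fun hc => hy (h1.2.symm.trans hc.2)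
      rw [if_neg hne, if_pos h1, h1.1, h1.2, ← move_xy hy h, Finset.sum_range_succ]
      push_cast; ring
    · by_cases h2 : u = x ∧ v = y'
      · rw [if_pos h2, if_neg h1, h2.1, h2.2, move_xy' hy h,
          eq_comm, Finset.sum_range_succ]
        push_cast; ring
      · rw [if_neg h1, if_neg h2, move_other hy h h1 h2]
  have hAsum : (∑ v, ∑ s ∈ Finset.range (colsum W v + 1), (lam v - kc * (s : ℝ) / (β v : ℝ)))
      + (lam y' - kc * (colsum (move W x y y') y' : ℝ) / (β y' : ℝ))
      = (∑ v, ∑ s ∈ Finset.range (colsum (move W x y y') v + 1), (lam v - kc * (s : ℝ) / (β v : ℝ)))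
      + (lam y - kc * (colsum W y : ℝ) / (β y : ℝ)) := by
    have := Finset.sum_congr rfl (fun v (_ : v ∈ Finset.univ) => hA v)
    simpa [Finset.sum_add_distrib, Finset.sum_ite_eq] using this
  have hBsum : (∑ u, ∑ v, ∑ s ∈ Finset.range (W u v + 1), (s : ℝ)) + (move W x y y' x y' : ℝ)
      = (∑ u, ∑ v, ∑ s ∈ Finset.range (move W x y y' u v + 1), (s : ℝ)) + (W x y : ℝ) := by
    have h1 : ∀ u, (∑ v, ∑ s ∈ Finset.range (W u v + 1), (s : ℝ))
        + (if u = x then (move W x y y' x y' : ℝ) else 0)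
        = (∑ v, ∑ s ∈ Finset.range (move W x y y' u v + 1), (s : ℝ))
        + (if u = x then (W x y : ℝ) else 0) := by
      intro u
      have := Finset.sum_congr rfl (fun v (_ : v ∈ Finset.univ) => hB u v)
      simpa [Finset.sum_add_distrib, ite_and, Finset.sum_ite_eq] using this
    have := Finset.sum_congr rfl (fun u (_ : u ∈ Finset.univ) => h1 u)
    simpa [Finset.sum_add_distrib, Finset.sum_ite_eq] using this
  unfold potential payoff
  linear_combination hAsum + ka * hBsum

end Helpers

/-- detailed balance: the chain on complete allocation states is
reversible for `μ(W) ∝ (α choose W) e^{γΨ(W)}`,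
where `(α choose W) = (∏_x α_x!)/(∏_{x,y} W_{xy}!)`. -/
theorem detailed_balance [DecidableEq X]
    (E : X → X → Prop) (α β : X → ℕ) (lam : X → ℝ) (kc ka γ : ℝ)
    (ν : X → ℝ) (Z : (X → X → ℕ) → X → ℝ)
    (P : (X → X → ℕ) → (X → X → ℕ) → ℝ)
    -- transitions occur only between states differing by a single-atom move
    (hPzero : ∀ W W' : X → X → ℕ, IsAllocState E α β W → IsAllocState E α β W' →
      W ≠ W' → (¬ ∃ x y y', y ≠ y' ∧ 0 < W x y ∧ W' = move W x y y') →
      P W W' = 0)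
    -- transition probability of a single-atom move
    (hPform : ∀ (W : X → X → ℕ), IsAllocState E α β W → ∀ x y y' : X, y ≠ y' →
      0 < W x y → colsum W y' < β y' →
      P W (move W x y y') =
        ν x * (W x y : ℝ) / (α x : ℝ) *
          Real.exp (γ * payoff lam kc ka β (move W x y y') x y') /
            Z (remove W x y) x) :
    ∀ W W' : X → X → ℕ, IsAllocState E α β W → IsAllocState E α β W' →
      ((∏ x, (α x).factorial : ℝ) / (∏ x, ∏ y, (W x y).factorial : ℝ)) *
          Real.exp (γ * potential lam kc ka β W) * P W W' =
        ((∏ x, (α x).factorial : ℝ) / (∏ x, ∏ y, (W' x y).factorial : ℝ)) *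
          Real.exp (γ * potential lam kc ka β W') * P W' W  := by
  intro W W' hW hW'
  by_cases hex : ∃ x y y', y ≠ y' ∧ 0 < W x y ∧ W' = move W x y y'
  · obtain ⟨x, y, y', hy, hpos, rfl⟩ := hex
    -- basic facts
    have hα : 0 < α x := by
      have hle : W x y ≤ ∑ v, W x v :=
        Finset.single_le_sum (fun _ _ => Nat.zero_le _) (Finset.mem_univ y)
      have := hW.2.1 x
      omega
    have hb' : colsum W y' < β y' := by
      have := hW'.2.2 y'
      rw [colsum_move_y' hy hpos] at this
      omega
    have hb : colsum (move W x y y') y < β y := by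
      have h1 := colsum_move_y hy hpos
      have h2 := hW.2.2 y
      omega
    have hpos' : 0 < move W x y y' x y' := by
      rw [move_xy' hy hpos]; omega
    have hP1 := hPform W hW x y y' hy hpos hb'
    have hP2 := hPform (move W x y y') hW' x y' y hy.symm hpos' hb
    rw [move_move hy hpos, remove_move hy hpos] at hP2
    rw [hP1, hP2]
    have hPW : (∏ u, ∏ v, ((W u v).factorial : ℝ)) ≠ 0 := by
      have : (0:ℝ) < ∏ u, ∏ v, ((W u v).factorial : ℝ) :=
        Finset.prod_pos fun _ _ => Finset.prod_pos fun _ _ => by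
          exact_mod_cast Nat.factorial_pos _
      exact this.ne'
    have hPM : (∏ u, ∏ v, ((move W x y y' u v).factorial : ℝ)) ≠ 0 := by
      have : (0:ℝ) < ∏ u, ∏ v, ((move W x y y' u v).factorial : ℝ) :=
        Finset.prod_pos fun _ _ => Finset.prod_pos fun _ _ => by
          exact_mod_cast Nat.factorial_pos _
      exact this.ne'
    have hfac : (∏ u, ∏ v, ((W u v).factorial : ℝ)) * (move W x y y' x y' : ℝ)
        = (∏ u, ∏ v, ((move W x y y' u v).factorial : ℝ)) * (W x y : ℝ) := by
      have := congrArg (Nat.cast : ℕ → ℝ) (fact_move hy hpos)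
      push_cast at this
      exact this
    have hdiv : (W x y : ℝ) / (∏ u, ∏ v, ((W u v).factorial : ℝ))
        = (move W x y y' x y' : ℝ) / (∏ u, ∏ v, ((move W x y y' u v).factorial : ℝ)) := by
      rw [div_eq_div_iff hPW hPM]
      linear_combination -hfac
    have hpot := potential_move lam kc ka β hy hpos
    have hexp : Real.exp (γ * potential lam kc ka β W)
          * Real.exp (γ * payoff lam kc ka β (move W x y y') x y')
        = Real.exp (γ * potential lam kc ka β (move W x y y'))
          * Real.exp (γ * payoff lam kc ka β W x y) := by
      rw [← Real.exp_add, ← Real.exp_add]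
      exact congrArg Real.exp (by linear_combination γ * hpot)
    calc ((∏ x, (α x).factorial : ℝ) / (∏ u, ∏ v, (W u v).factorial : ℝ)) *
          Real.exp (γ * potential lam kc ka β W) *
          (ν x * (W x y : ℝ) / (α x : ℝ) *
            Real.exp (γ * payoff lam kc ka β (move W x y y') x y') /
              Z (remove W x y) x)
        = ((∏ x, (α x).factorial : ℝ) * ν x / (α x : ℝ) / Z (remove W x y) x) *
            (((W x y : ℝ) / (∏ u, ∏ v, (W u v).factorial : ℝ)) *
              (Real.exp (γ * potential lam kc ka β W) *
                Real.exp (γ * payoff lam kc ka β (move W x y y') x y'))) := by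
          ring
      _ = ((∏ x, (α x).factorial : ℝ) * ν x / (α x : ℝ) / Z (remove W x y) x) *
            (((move W x y y' x y' : ℝ) / (∏ u, ∏ v, (move W x y y' u v).factorial : ℝ)) *
              (Real.exp (γ * potential lam kc ka β (move W x y y')) *
                Real.exp (γ * payoff lam kc ka β W x y))) := by
          rw [hdiv, hexp]
      _ = _ := by ring
  · by_cases heq : W = W'
    · subst heq; rfl
    · have h1 : P W W' = 0 := hPzero W W' hW hW' heq hex
      have h2 : P W' W = 0 := by
        apply hPzero W' W hW' hW (Ne.symm heq)
        rintro ⟨x, a, b, hab, hp, hmv⟩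
        exact hex ⟨x, b, a, hab.symm,
          by rw [hmv, move_xy' hab hp]; omega,
          by rw [hmv, move_move hab hp]⟩
      rw [h1, h2, mul_zero, mul_zero]
end
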